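/- arXiv:1404.5332 — 3 statements merged into one kernel-verified Lean document; each statement's English description precedes it below -/
import Mathlib

section
/- Let n ≥ 1 and l ≥ 1. Let A_n and P_n be n×n real symmetric positive definite matrices, and suppose there exist n×n real symmetric positive definite matrices P_n^(0), …, P_n^(l), positive real numbers α_0, …, α_{l−1} and β_0, …, β_{l−1} with α_j ≤ β_j for every j, and nonnegative integers r_0^−, …, r_{l−1}^− and r_0^+, …, r_{l−1}^+, such that: P_n^(0) = A_n, P_n^(l) = P_n, and for each j = 0, …, l−1 the eigenvalues of (P_n^(j+1))^{−1} P_n^(j) (which are real and positive) lie in the interval [α_j, β_j] except for at most r_j^− eigenvalues smaller than α_j and at most r_j^+ eigenvalues larger than β_j (counted with multiplicity). Then all eigenvalues of P_n^{−1} A_n lie in the interval [α, β], where α = ∏_{j=0}^{l−1} α_j and β = ∏_{j=0}^{l−1} β_j, except for at most r^− = Σ_{j=0}^{l−1} r_j^− eigenvalues smaller than α and at most r^+ = Σ_{j=0}^{l−1} r_j^+ eigenvalues larger than β (counted with multiplicity). -/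
open Matrix

open Matrix Polynomial Module

noncomputable section MSPAux

namespace MSPAux

local notation "⟪" x ", " y "⟫" => @inner ℝ _ _ x y


variable {n : ℕ}

/-- Characteristic polynomial is invariant under conjugation. -/
lemma charpoly_conj (C M D : Matrix (Fin n) (Fin n) ℝ)
    (h1 : C * D = 1) (h2 : D * C = 1) :
    (C * M * D).charpoly = M.charpoly := by
  classical
  set Cp := C.map (Polynomial.C : ℝ →+* ℝ[X]).toFun with hCp
  have mapmul : ∀ (X Y : Matrix (Fin n) (Fin n) ℝ),
      (X * Y).map (Polynomial.C : ℝ →+* ℝ[X]) =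
        X.map (Polynomial.C : ℝ →+* ℝ[X]) * Y.map (Polynomial.C : ℝ →+* ℝ[X]) :=
    fun X Y => Matrix.map_mul
  have hsc : Matrix.scalar (Fin n) (X : ℝ[X]) = (X : ℝ[X]) • (1 : Matrix (Fin n) (Fin n) ℝ[X]) := by
    ext i j
    by_cases h : i = j <;> simp [Matrix.scalar_apply, Matrix.one_apply, h, Matrix.diagonal_apply]
  have hCDmap : C.map (Polynomial.C : ℝ →+* ℝ[X]) * D.map (Polynomial.C : ℝ →+* ℝ[X]) = 1 := by
    rw [← mapmul, h1, Matrix.map_one _ (map_zero _) (map_one _)]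
  have hDCmap : D.map (Polynomial.C : ℝ →+* ℝ[X]) * C.map (Polynomial.C : ℝ →+* ℝ[X]) = 1 := by
    rw [← mapmul, h2, Matrix.map_one _ (map_zero _) (map_one _)]
  have key : charmatrix (C * M * D) =
      C.map (Polynomial.C : ℝ →+* ℝ[X]) * charmatrix M * D.map (Polynomial.C : ℝ →+* ℝ[X]) := by
    unfold charmatrix
    rw [RingHom.mapMatrix_apply, RingHom.mapMatrix_apply, hsc]
    rw [mapmul, mapmul]
    rw [Matrix.mul_sub, Matrix.sub_mul]
    congr 1
    rw [Matrix.mul_smul, mul_one, Matrix.smul_mul, hCDmap]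
  unfold Matrix.charpoly
  rw [key, det_mul, det_mul]
  have hdet : det (C.map (Polynomial.C : ℝ →+* ℝ[X])) * det (D.map (Polynomial.C : ℝ →+* ℝ[X])) = 1 := by
    rw [← det_mul, hCDmap, det_one]
  calc det (C.map (Polynomial.C : ℝ →+* ℝ[X])) * det (charmatrix M) * det (D.map (Polynomial.C : ℝ →+* ℝ[X]))
      = (det (C.map (Polynomial.C : ℝ →+* ℝ[X])) * det (D.map (Polynomial.C : ℝ →+* ℝ[X]))) * det (charmatrix M) := by ring
    _ = det (charmatrix M) := by rw [hdet, one_mul]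

lemma charpoly_diagonal (d : Fin n → ℝ) :
    (Matrix.diagonal d).charpoly = ∏ i, (X - Polynomial.C (d i)) := by
  have h : charmatrix (Matrix.diagonal d) = Matrix.diagonal (fun i => X - Polynomial.C (d i)) := by
    ext i j
    by_cases h : i = j
    · subst h; simp
    · simp [h, Matrix.diagonal_apply_ne _ h]
  rw [Matrix.charpoly, h, det_diagonal]

lemma roots_charpoly_hermitian (S : Matrix (Fin n) (Fin n) ℝ) (hS : S.IsHermitian) :
    S.charpoly.roots = Multiset.map hS.eigenvalues Finset.univ.val := by
  classical
  have hU1 : (hS.eigenvectorUnitary : Matrix (Fin n) (Fin n) ℝ) *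
      (star hS.eigenvectorUnitary : Matrix (Fin n) (Fin n) ℝ) = 1 :=
    (Matrix.mem_unitaryGroup_iff).mp hS.eigenvectorUnitary.2
  have hU2 : (star hS.eigenvectorUnitary : Matrix (Fin n) (Fin n) ℝ) *
      (hS.eigenvectorUnitary : Matrix (Fin n) (Fin n) ℝ) = 1 :=
    (Matrix.mem_unitaryGroup_iff').mp hS.eigenvectorUnitary.2
  have hdiag : (RCLike.ofReal ∘ hS.eigenvalues : Fin n → ℝ) = hS.eigenvalues := by
    funext i; simp
  have hcp : S.charpoly = (Matrix.diagonal hS.eigenvalues).charpoly := by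
    conv_lhs => rw [hS.spectral_theorem]
    rw [hdiag]
    exact charpoly_conj _ _ _ hU1 hU2
  rw [hcp, charpoly_diagonal]
  rw [Finset.prod_eq_multiset_prod]
  have : Multiset.map (fun i => X - Polynomial.C (hS.eigenvalues i)) Finset.univ.val =
      Multiset.map (fun a => X - Polynomial.C a) (Multiset.map hS.eigenvalues Finset.univ.val) := by
    rw [Multiset.map_map]; rfl
  rw [this, Polynomial.roots_multiset_prod_X_sub_C]





lemma repr_toEuclideanLin {S : Matrix (Fin n) (Fin n) ℝ} (hS : S.IsHermitian)
    (x : EuclideanSpace ℝ (Fin n)) (i : Fin n) :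
    hS.eigenvectorBasis.repr (Matrix.toEuclideanLin S x) i
      = hS.eigenvalues i * hS.eigenvectorBasis.repr x i := by
  rw [OrthonormalBasis.repr_apply_apply, OrthonormalBasis.repr_apply_apply]
  have hsym := (Matrix.isHermitian_iff_isSymmetric.1 hS)
  rw [← hsym (hS.eigenvectorBasis i) x]
  have heq : Matrix.toEuclideanLin S (hS.eigenvectorBasis i)
      = hS.eigenvalues i • hS.eigenvectorBasis i := by
    apply (WithLp.equiv 2 (Fin n → ℝ)).injective
    simp [Matrix.toEuclideanLin_apply, hS.mulVec_eigenvectorBasis]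
  rw [heq, real_inner_smul_left]

lemma inner_self_eq_sum {S : Matrix (Fin n) (Fin n) ℝ} (hS : S.IsHermitian)
    (x : EuclideanSpace ℝ (Fin n)) :
    ⟪x, x⟫ = ∑ i, (hS.eigenvectorBasis.repr x i) ^ 2 := by
  rw [← hS.eigenvectorBasis.repr.inner_map_map x x, PiLp.inner_apply]
  simp [RCLike.inner_apply, sq]

lemma inner_toEuclideanLin_eq_sum {S : Matrix (Fin n) (Fin n) ℝ} (hS : S.IsHermitian)
    (x : EuclideanSpace ℝ (Fin n)) :
    ⟪x, Matrix.toEuclideanLin S x⟫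
      = ∑ i, hS.eigenvalues i * (hS.eigenvectorBasis.repr x i) ^ 2 := by
  rw [← hS.eigenvectorBasis.repr.inner_map_map x (Matrix.toEuclideanLin S x),
    PiLp.inner_apply]
  simp only [RCLike.inner_apply, conj_trivial]
  refine Finset.sum_congr rfl fun i _ => ?_
  rw [repr_toEuclideanLin hS x i]
  ring

lemma exists_subspace_count_lt {S : Matrix (Fin n) (Fin n) ℝ} (hS : S.IsHermitian) (t : ℝ) :
    ∃ V : Submodule ℝ (EuclideanSpace ℝ (Fin n)),
      n ≤ finrank ℝ V + (Finset.univ.filter fun i => hS.eigenvalues i < t).card ∧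
      ∀ x ∈ V, t * ⟪x, x⟫ ≤ ⟪x, Matrix.toEuclideanLin S x⟫ := by
  classical
  set bad := Finset.univ.filter fun i => hS.eigenvalues i < t with hbad
  let φ : EuclideanSpace ℝ (Fin n) →ₗ[ℝ] (bad → ℝ) :=
    { toFun := fun x j => hS.eigenvectorBasis.repr x j.1
      map_add' := fun x y => by funext j; simp
      map_smul' := fun c x => by funext j; simp }
  refine ⟨LinearMap.ker φ, ?_, ?_⟩
  · have h1 := LinearMap.finrank_range_add_finrank_ker φ
    have h2 : finrank ℝ (LinearMap.range φ) ≤ bad.card := by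
      have h := Submodule.finrank_le (LinearMap.range φ)
      simpa [Module.finrank_fintype_fun_eq_card, Fintype.card_coe] using h
    have h3 : finrank ℝ (EuclideanSpace ℝ (Fin n)) = n := finrank_euclideanSpace_fin
    omega
  · intro x hx
    rw [inner_self_eq_sum hS x, inner_toEuclideanLin_eq_sum hS x, Finset.mul_sum]
    refine Finset.sum_le_sum fun i _ => ?_
    by_cases hib : hS.eigenvalues i < t
    · have h0 : hS.eigenvectorBasis.repr x i = 0 := by
        have h := LinearMap.mem_ker.1 hx
        have h' := congrFun h (⟨i, by simp [hbad, hib]⟩ : {j // j ∈ bad})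
        exact h'
      simp [h0]
    · push_neg at hib
      nlinarith [sq_nonneg (hS.eigenvectorBasis.repr x i)]

lemma exists_subspace_count_gt {S : Matrix (Fin n) (Fin n) ℝ} (hS : S.IsHermitian) (t : ℝ) :
    ∃ V : Submodule ℝ (EuclideanSpace ℝ (Fin n)),
      n ≤ finrank ℝ V + (Finset.univ.filter fun i => t < hS.eigenvalues i).card ∧
      ∀ x ∈ V, ⟪x, Matrix.toEuclideanLin S x⟫ ≤ t * ⟪x, x⟫ := by
  classical
  set bad := Finset.univ.filter fun i => t < hS.eigenvalues i with hbad
  let φ : EuclideanSpace ℝ (Fin n) →ₗ[ℝ] (bad → ℝ) :=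
    { toFun := fun x j => hS.eigenvectorBasis.repr x j.1
      map_add' := fun x y => by funext j; simp
      map_smul' := fun c x => by funext j; simp }
  refine ⟨LinearMap.ker φ, ?_, ?_⟩
  · have h1 := LinearMap.finrank_range_add_finrank_ker φ
    have h2 : finrank ℝ (LinearMap.range φ) ≤ bad.card := by
      have h := Submodule.finrank_le (LinearMap.range φ)
      simpa [Module.finrank_fintype_fun_eq_card, Fintype.card_coe] using h
    have h3 : finrank ℝ (EuclideanSpace ℝ (Fin n)) = n := finrank_euclideanSpace_fin
    omega
  · intro x hx
    rw [inner_self_eq_sum hS x, inner_toEuclideanLin_eq_sum hS x, Finset.mul_sum]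
    refine Finset.sum_le_sum fun i _ => ?_
    by_cases hib : t < hS.eigenvalues i
    · have h0 : hS.eigenvectorBasis.repr x i = 0 := by
        have h := LinearMap.mem_ker.1 hx
        have h' := congrFun h (⟨i, by simp [hbad, hib]⟩ : {j // j ∈ bad})
        exact h'
      simp [h0]
    · push_neg at hib
      nlinarith [sq_nonneg (hS.eigenvectorBasis.repr x i)]

lemma count_lt_le_of_subspace {S : Matrix (Fin n) (Fin n) ℝ} (hS : S.IsHermitian) (t : ℝ) (r : ℕ)
    (V : Submodule ℝ (EuclideanSpace ℝ (Fin n)))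
    (hd : n ≤ finrank ℝ V + r)
    (hq : ∀ x ∈ V, t * ⟪x, x⟫ ≤ ⟪x, Matrix.toEuclideanLin S x⟫) :
    (Finset.univ.filter fun i => hS.eigenvalues i < t).card ≤ r := by
  classical
  set good := Finset.univ.filter fun i => ¬ hS.eigenvalues i < t with hgood
  let ψ : V →ₗ[ℝ] (good → ℝ) :=
    { toFun := fun x j => hS.eigenvectorBasis.repr (x : EuclideanSpace ℝ (Fin n)) j.1
      map_add' := fun x y => by funext j; simp
      map_smul' := fun c x => by funext j; simp }
  have hinj : Function.Injective ψ := by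
    refine (injective_iff_map_eq_zero ψ).2 fun xv hxv => ?_
    have hzero : ∀ i, ¬ hS.eigenvalues i < t →
        hS.eigenvectorBasis.repr (xv : EuclideanSpace ℝ (Fin n)) i = 0 := by
      intro i hi
      have h' := congrFun hxv (⟨i, by
        simp only [hgood, Finset.mem_filter, Finset.mem_univ, true_and]; exact hi⟩ :
          {j // j ∈ good})
      exact h'
    have h1 := hq (xv : EuclideanSpace ℝ (Fin n)) xv.2
    rw [inner_self_eq_sum hS, inner_toEuclideanLin_eq_sum hS, Finset.mul_sum] at h1
    have hsum : ∑ i, (t - hS.eigenvalues i) *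
        (hS.eigenvectorBasis.repr (xv : EuclideanSpace ℝ (Fin n)) i) ^ 2 ≤ 0 := by
      have : ∑ i, (t - hS.eigenvalues i) *
          (hS.eigenvectorBasis.repr (xv : EuclideanSpace ℝ (Fin n)) i) ^ 2
          = ∑ i, t * (hS.eigenvectorBasis.repr (xv : EuclideanSpace ℝ (Fin n)) i) ^ 2
            - ∑ i, hS.eigenvalues i *
              (hS.eigenvectorBasis.repr (xv : EuclideanSpace ℝ (Fin n)) i) ^ 2 := by
        rw [← Finset.sum_sub_distrib]
        refine Finset.sum_congr rfl fun i _ => by ring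
      rw [this]
      linarith
    have hnonneg : ∀ i ∈ Finset.univ, 0 ≤ (t - hS.eigenvalues i) *
        (hS.eigenvectorBasis.repr (xv : EuclideanSpace ℝ (Fin n)) i) ^ 2 := by
      intro i _
      by_cases hi : hS.eigenvalues i < t
      · have : (0:ℝ) ≤ t - hS.eigenvalues i := by linarith
        positivity
      · rw [hzero i hi]; simp
    have hall := (Finset.sum_eq_zero_iff_of_nonneg hnonneg).1
      (le_antisymm hsum (Finset.sum_nonneg hnonneg))
    have hcoords : ∀ i, hS.eigenvectorBasis.repr (xv : EuclideanSpace ℝ (Fin n)) i = 0 := by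
      intro i
      by_cases hi : hS.eigenvalues i < t
      · have h := hall i (Finset.mem_univ i)
        have ht : t - hS.eigenvalues i ≠ 0 := by linarith
        have := mul_eq_zero.1 h
        rcases this with h' | h'
        · exact absurd h' ht
        · exact (pow_eq_zero_iff two_ne_zero).1 h'
      · exact hzero i hi
    have hx0 : (xv : EuclideanSpace ℝ (Fin n)) = 0 := by
      have : hS.eigenvectorBasis.repr (xv : EuclideanSpace ℝ (Fin n)) = 0 := by
        ext i; exact hcoords i
      exact (hS.eigenvectorBasis.repr.map_eq_zero_iff).1 this
    exact Subtype.ext hx0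
  have hle : finrank ℝ V ≤ good.card := by
    have h := LinearMap.finrank_le_finrank_of_injective hinj
    simpa [Module.finrank_fintype_fun_eq_card, Fintype.card_coe] using h
  have hsplit := Finset.card_filter_add_card_filter_not
    (s := (Finset.univ : Finset (Fin n))) (p := fun i => hS.eigenvalues i < t)
  simp only [Finset.card_univ, Fintype.card_fin] at hsplit
  have hgc : (Finset.filter (fun a => ¬hS.eigenvalues a < t) Finset.univ) = good := rfl
  rw [hgc] at hsplit
  omega

lemma count_gt_le_of_subspace {S : Matrix (Fin n) (Fin n) ℝ} (hS : S.IsHermitian) (t : ℝ) (r : ℕ)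
    (V : Submodule ℝ (EuclideanSpace ℝ (Fin n)))
    (hd : n ≤ finrank ℝ V + r)
    (hq : ∀ x ∈ V, ⟪x, Matrix.toEuclideanLin S x⟫ ≤ t * ⟪x, x⟫) :
    (Finset.univ.filter fun i => t < hS.eigenvalues i).card ≤ r := by
  classical
  set good := Finset.univ.filter fun i => ¬ t < hS.eigenvalues i with hgood
  let ψ : V →ₗ[ℝ] (good → ℝ) :=
    { toFun := fun x j => hS.eigenvectorBasis.repr (x : EuclideanSpace ℝ (Fin n)) j.1
      map_add' := fun x y => by funext j; simp
      map_smul' := fun c x => by funext j; simp }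
  have hinj : Function.Injective ψ := by
    refine (injective_iff_map_eq_zero ψ).2 fun xv hxv => ?_
    have hzero : ∀ i, ¬ t < hS.eigenvalues i →
        hS.eigenvectorBasis.repr (xv : EuclideanSpace ℝ (Fin n)) i = 0 := by
      intro i hi
      have h' := congrFun hxv (⟨i, by
        simp only [hgood, Finset.mem_filter, Finset.mem_univ, true_and]; exact hi⟩ :
          {j // j ∈ good})
      exact h'
    have h1 := hq (xv : EuclideanSpace ℝ (Fin n)) xv.2
    rw [inner_self_eq_sum hS, inner_toEuclideanLin_eq_sum hS, Finset.mul_sum] at h1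
    have hsum : ∑ i, (hS.eigenvalues i - t) *
        (hS.eigenvectorBasis.repr (xv : EuclideanSpace ℝ (Fin n)) i) ^ 2 ≤ 0 := by
      have heq : ∑ i, (hS.eigenvalues i - t) *
          (hS.eigenvectorBasis.repr (xv : EuclideanSpace ℝ (Fin n)) i) ^ 2
          = ∑ i, hS.eigenvalues i *
              (hS.eigenvectorBasis.repr (xv : EuclideanSpace ℝ (Fin n)) i) ^ 2
            - ∑ i, t * (hS.eigenvectorBasis.repr (xv : EuclideanSpace ℝ (Fin n)) i) ^ 2 := by
        rw [← Finset.sum_sub_distrib]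
        refine Finset.sum_congr rfl fun i _ => by ring
      rw [heq]
      linarith
    have hnonneg : ∀ i ∈ Finset.univ, 0 ≤ (hS.eigenvalues i - t) *
        (hS.eigenvectorBasis.repr (xv : EuclideanSpace ℝ (Fin n)) i) ^ 2 := by
      intro i _
      by_cases hi : t < hS.eigenvalues i
      · have : (0:ℝ) ≤ hS.eigenvalues i - t := by linarith
        positivity
      · rw [hzero i hi]; simp
    have hall := (Finset.sum_eq_zero_iff_of_nonneg hnonneg).1
      (le_antisymm hsum (Finset.sum_nonneg hnonneg))
    have hcoords : ∀ i, hS.eigenvectorBasis.repr (xv : EuclideanSpace ℝ (Fin n)) i = 0 := by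
      intro i
      by_cases hi : t < hS.eigenvalues i
      · have h := hall i (Finset.mem_univ i)
        have ht : hS.eigenvalues i - t ≠ 0 := by linarith
        rcases mul_eq_zero.1 h with h' | h'
        · exact absurd h' ht
        · exact (pow_eq_zero_iff two_ne_zero).1 h'
      · exact hzero i hi
    have hx0 : (xv : EuclideanSpace ℝ (Fin n)) = 0 := by
      have hrepr : hS.eigenvectorBasis.repr (xv : EuclideanSpace ℝ (Fin n)) = 0 := by
        ext i; exact hcoords i
      exact (hS.eigenvectorBasis.repr.map_eq_zero_iff).1 hrepr
    exact Subtype.ext hx0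
  have hle : finrank ℝ V ≤ good.card := by
    have h := LinearMap.finrank_le_finrank_of_injective hinj
    simpa [Module.finrank_fintype_fun_eq_card, Fintype.card_coe] using h
  have hsplit := Finset.card_filter_add_card_filter_not
    (s := (Finset.univ : Finset (Fin n))) (p := fun i => t < hS.eigenvalues i)
  simp only [Finset.card_univ, Fintype.card_fin] at hsplit
  have hgc : (Finset.filter (fun a => ¬t < hS.eigenvalues a) Finset.univ) = good := rfl
  rw [hgc] at hsplit
  omega



variable {A P : Matrix (Fin n) (Fin n) ℝ}

lemma toEuclideanLin_mul (M N : Matrix (Fin n) (Fin n) ℝ) (x : EuclideanSpace ℝ (Fin n)) :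
    Matrix.toEuclideanLin (M * N) x = Matrix.toEuclideanLin M (Matrix.toEuclideanLin N x) := by
  simp [Matrix.toEuclideanLin_apply, Matrix.mulVec_mulVec]

open scoped MatrixOrder in
lemma count_lt_iff (hA : A.PosDef) (hP : P.PosDef) (t : ℝ) (r : ℕ) :
    ((P⁻¹ * A).charpoly.roots.filter (fun x => x < t)).card ≤ r ↔
    ∃ V : Submodule ℝ (EuclideanSpace ℝ (Fin n)), n ≤ finrank ℝ V + r ∧
      ∀ x ∈ V, t * ⟪x, Matrix.toEuclideanLin P x⟫ ≤ ⟪x, Matrix.toEuclideanLin A x⟫ := by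
  classical
  set R := CFC.sqrt P with hRdef
  have hRh : R.IsHermitian := (CFC.sqrt_nonneg P).isSelfAdjoint
  have hRR : R * R = P := CFC.sqrt_mul_sqrt_self P hP.posSemidef.nonneg
  have hdet : IsUnit R.det := by
    have hPdet : P.det ≠ 0 := ne_of_gt hP.det_pos
    have : R.det * R.det = P.det := by rw [← det_mul, hRR]
    exact isUnit_iff_ne_zero.2 fun h => hPdet (by rw [← this, h, zero_mul])
  have hinv1 : R * R⁻¹ = 1 := Matrix.mul_nonsing_inv _ hdet
  have hinv2 : R⁻¹ * R = 1 := Matrix.nonsing_inv_mul _ hdet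
  set S := R⁻¹ * A * R⁻¹ with hSdef
  have hRinvh : (R⁻¹)ᴴ = R⁻¹ := by
    rw [Matrix.conjTranspose_nonsing_inv, hRh]
  have hSh : S.IsHermitian := by
    show Sᴴ = S
    rw [hSdef, Matrix.conjTranspose_mul, Matrix.conjTranspose_mul, hRinvh, hA.isHermitian,
      Matrix.mul_assoc]
  have hA_eq : R * S * R = A := by
    rw [hSdef]
    have : R * (R⁻¹ * A * R⁻¹) * R = (R * R⁻¹) * A * (R⁻¹ * R) := by
      noncomm_ring
    rw [this, hinv1, hinv2, one_mul, mul_one]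
  have hcp : (P⁻¹ * A).charpoly = S.charpoly := by
    have hPinv : P⁻¹ = R⁻¹ * R⁻¹ := by rw [← hRR, Matrix.mul_inv_rev]
    have : P⁻¹ * A = R⁻¹ * S * R := by
      rw [hPinv, hSdef]
      have : R⁻¹ * (R⁻¹ * A * R⁻¹) * R = R⁻¹ * R⁻¹ * A * (R⁻¹ * R) := by
        noncomm_ring
      rw [this, hinv2, mul_one]
    rw [this]
    exact charpoly_conj _ _ _ hinv2 hinv1
  have hcount : ((P⁻¹ * A).charpoly.roots.filter (fun x => x < t)).card
      = (Finset.univ.filter fun i => hSh.eigenvalues i < t).card := by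
    rw [hcp, roots_charpoly_hermitian S hSh, Multiset.filter_map, Multiset.card_map]
    rfl
  -- the congruence equivalence
  set e : EuclideanSpace ℝ (Fin n) ≃ₗ[ℝ] EuclideanSpace ℝ (Fin n) :=
    LinearEquiv.ofLinear (Matrix.toEuclideanLin R) (Matrix.toEuclideanLin R⁻¹)
      (by
        apply LinearMap.ext
        intro x
        simp only [LinearMap.comp_apply, LinearMap.id_apply]
        rw [← toEuclideanLin_mul, hinv1]
        simp [Matrix.toEuclideanLin_apply])
      (by
        apply LinearMap.ext
        intro x
        simp only [LinearMap.comp_apply, LinearMap.id_apply]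
        rw [← toEuclideanLin_mul, hinv2]
        simp [Matrix.toEuclideanLin_apply]) with hedef
  have he_apply : ∀ x, e x = Matrix.toEuclideanLin R x := fun x => rfl
  have hsymR := (Matrix.isHermitian_iff_isSymmetric.1 hRh)
  have hinnerP : ∀ x : EuclideanSpace ℝ (Fin n),
      ⟪x, Matrix.toEuclideanLin P x⟫ = ⟪e x, e x⟫ := by
    intro x
    rw [he_apply, ← hRR, toEuclideanLin_mul]
    exact (hsymR x (Matrix.toEuclideanLin R x)).symm
  have hinnerA : ∀ x : EuclideanSpace ℝ (Fin n),
      ⟪x, Matrix.toEuclideanLin A x⟫ = ⟪e x, Matrix.toEuclideanLin S (e x)⟫ := by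
    intro x
    rw [he_apply, ← hA_eq, toEuclideanLin_mul, toEuclideanLin_mul]
    exact (hsymR x (Matrix.toEuclideanLin S (Matrix.toEuclideanLin R x))).symm
  constructor
  · intro h
    rw [hcount] at h
    obtain ⟨V, hV1, hV2⟩ := exists_subspace_count_lt hSh t
    refine ⟨Submodule.map (e.symm : EuclideanSpace ℝ (Fin n) →ₗ[ℝ] EuclideanSpace ℝ (Fin n)) V,
      ?_, ?_⟩
    · rw [LinearEquiv.finrank_map_eq]
      omega
    · intro x hx
      obtain ⟨y, hy, rfl⟩ := hx
      simp only [LinearEquiv.coe_coe]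
      rw [hinnerP, hinnerA, e.apply_symm_apply]
      exact hV2 y hy
  · intro ⟨V, hV1, hV2⟩
    rw [hcount]
    refine count_lt_le_of_subspace hSh t r
      (Submodule.map (e : EuclideanSpace ℝ (Fin n) →ₗ[ℝ] EuclideanSpace ℝ (Fin n)) V) ?_ ?_
    · rw [LinearEquiv.finrank_map_eq]; omega
    · intro y hy
      obtain ⟨x, hx, rfl⟩ := hy
      simp only [LinearEquiv.coe_coe]
      rw [← hinnerP, ← hinnerA]
      exact hV2 x hx

open scoped MatrixOrder in
lemma count_gt_iff (hA : A.PosDef) (hP : P.PosDef) (t : ℝ) (r : ℕ) :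
    ((P⁻¹ * A).charpoly.roots.filter (fun x => t < x)).card ≤ r ↔
    ∃ V : Submodule ℝ (EuclideanSpace ℝ (Fin n)), n ≤ finrank ℝ V + r ∧
      ∀ x ∈ V, ⟪x, Matrix.toEuclideanLin A x⟫ ≤ t * ⟪x, Matrix.toEuclideanLin P x⟫ := by
  classical
  set R := CFC.sqrt P with hRdef
  have hRh : R.IsHermitian := (CFC.sqrt_nonneg P).isSelfAdjoint
  have hRR : R * R = P := CFC.sqrt_mul_sqrt_self P hP.posSemidef.nonneg
  have hdet : IsUnit R.det := by
    have hPdet : P.det ≠ 0 := ne_of_gt hP.det_pos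
    have : R.det * R.det = P.det := by rw [← det_mul, hRR]
    exact isUnit_iff_ne_zero.2 fun h => hPdet (by rw [← this, h, zero_mul])
  have hinv1 : R * R⁻¹ = 1 := Matrix.mul_nonsing_inv _ hdet
  have hinv2 : R⁻¹ * R = 1 := Matrix.nonsing_inv_mul _ hdet
  set S := R⁻¹ * A * R⁻¹ with hSdef
  have hRinvh : (R⁻¹)ᴴ = R⁻¹ := by
    rw [Matrix.conjTranspose_nonsing_inv, hRh]
  have hSh : S.IsHermitian := by
    show Sᴴ = S
    rw [hSdef, Matrix.conjTranspose_mul, Matrix.conjTranspose_mul, hRinvh, hA.isHermitian,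
      Matrix.mul_assoc]
  have hA_eq : R * S * R = A := by
    rw [hSdef]
    have : R * (R⁻¹ * A * R⁻¹) * R = (R * R⁻¹) * A * (R⁻¹ * R) := by
      noncomm_ring
    rw [this, hinv1, hinv2, one_mul, mul_one]
  have hcp : (P⁻¹ * A).charpoly = S.charpoly := by
    have hPinv : P⁻¹ = R⁻¹ * R⁻¹ := by rw [← hRR, Matrix.mul_inv_rev]
    have : P⁻¹ * A = R⁻¹ * S * R := by
      rw [hPinv, hSdef]
      have : R⁻¹ * (R⁻¹ * A * R⁻¹) * R = R⁻¹ * R⁻¹ * A * (R⁻¹ * R) := by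
        noncomm_ring
      rw [this, hinv2, mul_one]
    rw [this]
    exact charpoly_conj _ _ _ hinv2 hinv1
  have hcount : ((P⁻¹ * A).charpoly.roots.filter (fun x => t < x)).card
      = (Finset.univ.filter fun i => t < hSh.eigenvalues i).card := by
    rw [hcp, roots_charpoly_hermitian S hSh, Multiset.filter_map, Multiset.card_map]
    rfl
  -- the congruence equivalence
  set e : EuclideanSpace ℝ (Fin n) ≃ₗ[ℝ] EuclideanSpace ℝ (Fin n) :=
    LinearEquiv.ofLinear (Matrix.toEuclideanLin R) (Matrix.toEuclideanLin R⁻¹)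
      (by
        apply LinearMap.ext
        intro x
        simp only [LinearMap.comp_apply, LinearMap.id_apply]
        rw [← toEuclideanLin_mul, hinv1]
        simp [Matrix.toEuclideanLin_apply])
      (by
        apply LinearMap.ext
        intro x
        simp only [LinearMap.comp_apply, LinearMap.id_apply]
        rw [← toEuclideanLin_mul, hinv2]
        simp [Matrix.toEuclideanLin_apply]) with hedef
  have he_apply : ∀ x, e x = Matrix.toEuclideanLin R x := fun x => rfl
  have hsymR := (Matrix.isHermitian_iff_isSymmetric.1 hRh)
  have hinnerP : ∀ x : EuclideanSpace ℝ (Fin n),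
      ⟪x, Matrix.toEuclideanLin P x⟫ = ⟪e x, e x⟫ := by
    intro x
    rw [he_apply, ← hRR, toEuclideanLin_mul]
    exact (hsymR x (Matrix.toEuclideanLin R x)).symm
  have hinnerA : ∀ x : EuclideanSpace ℝ (Fin n),
      ⟪x, Matrix.toEuclideanLin A x⟫ = ⟪e x, Matrix.toEuclideanLin S (e x)⟫ := by
    intro x
    rw [he_apply, ← hA_eq, toEuclideanLin_mul, toEuclideanLin_mul]
    exact (hsymR x (Matrix.toEuclideanLin S (Matrix.toEuclideanLin R x))).symm
  constructor
  · intro h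
    rw [hcount] at h
    obtain ⟨V, hV1, hV2⟩ := exists_subspace_count_gt hSh t
    refine ⟨Submodule.map (e.symm : EuclideanSpace ℝ (Fin n) →ₗ[ℝ] EuclideanSpace ℝ (Fin n)) V,
      ?_, ?_⟩
    · rw [LinearEquiv.finrank_map_eq]
      omega
    · intro x hx
      obtain ⟨y, hy, rfl⟩ := hx
      simp only [LinearEquiv.coe_coe]
      rw [hinnerP, hinnerA, e.apply_symm_apply]
      exact hV2 y hy
  · intro ⟨V, hV1, hV2⟩
    rw [hcount]
    refine count_gt_le_of_subspace hSh t r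
      (Submodule.map (e : EuclideanSpace ℝ (Fin n) →ₗ[ℝ] EuclideanSpace ℝ (Fin n)) V) ?_ ?_
    · rw [LinearEquiv.finrank_map_eq]; omega
    · intro y hy
      obtain ⟨x, hx, rfl⟩ := hy
      simp only [LinearEquiv.coe_coe]
      rw [← hinnerP, ← hinnerA]
      exact hV2 x hx

def LB (A P : Matrix (Fin n) (Fin n) ℝ) (t : ℝ) (r : ℕ) : Prop :=
  ∃ V : Submodule ℝ (EuclideanSpace ℝ (Fin n)), n ≤ finrank ℝ V + r ∧
    ∀ x ∈ V, t * ⟪x, Matrix.toEuclideanLin P x⟫ ≤ ⟪x, Matrix.toEuclideanLin A x⟫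

def UB (A P : Matrix (Fin n) (Fin n) ℝ) (t : ℝ) (r : ℕ) : Prop :=
  ∃ V : Submodule ℝ (EuclideanSpace ℝ (Fin n)), n ≤ finrank ℝ V + r ∧
    ∀ x ∈ V, ⟪x, Matrix.toEuclideanLin A x⟫ ≤ t * ⟪x, Matrix.toEuclideanLin P x⟫

lemma count_lt_iff_LB (hA : A.PosDef) (hP : P.PosDef) (t : ℝ) (r : ℕ) :
    ((P⁻¹ * A).charpoly.roots.filter (fun x => x < t)).card ≤ r ↔ LB A P t r :=
  count_lt_iff hA hP t r

lemma count_gt_iff_UB (hA : A.PosDef) (hP : P.PosDef) (t : ℝ) (r : ℕ) :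
    ((P⁻¹ * A).charpoly.roots.filter (fun x => t < x)).card ≤ r ↔ UB A P t r :=
  count_gt_iff hA hP t r

lemma LB_refl (A : Matrix (Fin n) (Fin n) ℝ) : LB A A 1 0 := by
  refine ⟨⊤, ?_, fun x _ => by rw [one_mul]⟩
  simp [finrank_top]

lemma UB_refl (A : Matrix (Fin n) (Fin n) ℝ) : UB A A 1 0 := by
  refine ⟨⊤, ?_, fun x _ => by rw [one_mul]⟩
  simp [finrank_top]

lemma LB_trans {A M P : Matrix (Fin n) (Fin n) ℝ} {s t : ℝ} {r₁ r₂ : ℕ}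
    (hs : 0 ≤ s) (h₁ : LB A M s r₁) (h₂ : LB M P t r₂) :
    LB A P (s * t) (r₁ + r₂) := by
  obtain ⟨V₁, hd₁, hq₁⟩ := h₁
  obtain ⟨V₂, hd₂, hq₂⟩ := h₂
  refine ⟨V₁ ⊓ V₂, ?_, ?_⟩
  · have hsup := Submodule.finrank_sup_add_finrank_inf_eq V₁ V₂
    have hle : finrank ℝ (V₁ ⊔ V₂ : Submodule ℝ (EuclideanSpace ℝ (Fin n))) ≤ n := by
      have h := Submodule.finrank_le (V₁ ⊔ V₂)
      simpa [finrank_euclideanSpace] using h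
    omega
  · intro x hx
    rw [Submodule.mem_inf] at hx
    have h1 := hq₁ x hx.1
    have h2 := mul_le_mul_of_nonneg_left (hq₂ x hx.2) hs
    calc s * t * ⟪x, Matrix.toEuclideanLin P x⟫
        = s * (t * ⟪x, Matrix.toEuclideanLin P x⟫) := by ring
      _ ≤ s * ⟪x, Matrix.toEuclideanLin M x⟫ := h2
      _ ≤ ⟪x, Matrix.toEuclideanLin A x⟫ := h1

lemma UB_trans {A M P : Matrix (Fin n) (Fin n) ℝ} {s t : ℝ} {r₁ r₂ : ℕ}
    (hs : 0 ≤ s) (h₁ : UB A M s r₁) (h₂ : UB M P t r₂) :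
    UB A P (s * t) (r₁ + r₂) := by
  obtain ⟨V₁, hd₁, hq₁⟩ := h₁
  obtain ⟨V₂, hd₂, hq₂⟩ := h₂
  refine ⟨V₁ ⊓ V₂, ?_, ?_⟩
  · have hsup := Submodule.finrank_sup_add_finrank_inf_eq V₁ V₂
    have hle : finrank ℝ (V₁ ⊔ V₂ : Submodule ℝ (EuclideanSpace ℝ (Fin n))) ≤ n := by
      have h := Submodule.finrank_le (V₁ ⊔ V₂)
      simpa [finrank_euclideanSpace] using h
    omega
  · intro x hx
    rw [Submodule.mem_inf] at hx
    have h1 := hq₁ x hx.1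
    have h2 := mul_le_mul_of_nonneg_left (hq₂ x hx.2) hs
    calc ⟪x, Matrix.toEuclideanLin A x⟫
        ≤ s * ⟪x, Matrix.toEuclideanLin M x⟫ := h1
      _ ≤ s * (t * ⟪x, Matrix.toEuclideanLin P x⟫) := h2
      _ = s * t * ⟪x, Matrix.toEuclideanLin P x⟫ := by ring

end MSPAux
end MSPAux

open MSPAux in
/-- **Multiple step preconditioning (Theorem on PCG chains).**
Let `A, P` be `n × n` real symmetric positive definite matrices.  Suppose there are
positive definite matrices `Q 0, …, Q l` with `Q 0 = A`, `Q l = P`, positive numbers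
`α j ≤ β j` and integers `rm j, rp j` such that the eigenvalues of `(Q (j+1))⁻¹ * Q j`
(which are real and positive, counted with multiplicity as roots of the characteristic
polynomial) lie in `[α j, β j]` except for at most `rm j` eigenvalues smaller than `α j`
and at most `rp j` larger than `β j`.  Then all eigenvalues of `P⁻¹ * A` lie in
`[∏ α j, ∏ β j]` except for at most `∑ rm j` smaller than `∏ α j` and at most
`∑ rp j` larger than `∏ β j`. -/
theorem multiple_step_preconditioning
    (n l : ℕ) (hn : 1 ≤ n) (hl : 1 ≤ l)
    (A P : Matrix (Fin n) (Fin n) ℝ) (hA : A.PosDef) (hP : P.PosDef)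
    (Q : Fin (l + 1) → Matrix (Fin n) (Fin n) ℝ)
    (hQ : ∀ j, (Q j).PosDef)
    (α β : Fin l → ℝ)
    (hα : ∀ j, 0 < α j) (hβ : ∀ j, 0 < β j) (hαβ : ∀ j, α j ≤ β j)
    (rm rp : Fin l → ℕ)
    (hQ0 : Q 0 = A) (hQl : Q (Fin.last l) = P)
    (hsmall : ∀ j : Fin l,
      (((Q j.succ)⁻¹ * Q j.castSucc).charpoly.roots.filter
        (fun x => x < α j)).card ≤ rm j)
    (hlarge : ∀ j : Fin l,
      (((Q j.succ)⁻¹ * Q j.castSucc).charpoly.roots.filter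
        (fun x => β j < x)).card ≤ rp j) :
    (((P⁻¹ * A).charpoly.roots.filter
        (fun x => x < ∏ j, α j)).card ≤ ∑ j, rm j) ∧
    (((P⁻¹ * A).charpoly.roots.filter
        (fun x => (∏ j, β j) < x)).card ≤ ∑ j, rp j) := by
  classical
  set α' : ℕ → ℝ := fun j => if h : j < l then α ⟨j, h⟩ else 1 with hα'
  set β' : ℕ → ℝ := fun j => if h : j < l then β ⟨j, h⟩ else 1 with hβ'
  set rm' : ℕ → ℕ := fun j => if h : j < l then rm ⟨j, h⟩ else 0 with hrm'
  set rp' : ℕ → ℕ := fun j => if h : j < l then rp ⟨j, h⟩ else 0 with hrp'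
  have hα'pos : ∀ j, 0 < α' j := by
    intro j; rw [hα']; dsimp only; split
    · exact hα _
    · exact one_pos
  have hβ'pos : ∀ j, 0 < β' j := by
    intro j; rw [hβ']; dsimp only; split
    · exact hβ _
    · exact one_pos
  have key : ∀ m : ℕ, ∀ hm : m ≤ l,
      LB A (Q ⟨m, Nat.lt_succ_of_le hm⟩) (∏ j ∈ Finset.range m, α' j)
          (∑ j ∈ Finset.range m, rm' j)
      ∧ UB A (Q ⟨m, Nat.lt_succ_of_le hm⟩) (∏ j ∈ Finset.range m, β' j)
          (∑ j ∈ Finset.range m, rp' j) := by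
    intro m
    induction m with
    | zero =>
      intro hm
      have h0 : Q ⟨0, Nat.lt_succ_of_le hm⟩ = A := by
        rw [show (⟨0, Nat.lt_succ_of_le hm⟩ : Fin (l + 1)) = 0 from rfl, hQ0]
      simp only [Finset.range_zero, Finset.prod_empty, Finset.sum_empty, h0]
      exact ⟨LB_refl A, UB_refl A⟩
    | succ m ih =>
      intro hm
      have hml : m < l := hm
      have ihm := ih (le_of_lt hml)
      set j : Fin l := ⟨m, hml⟩ with hj
      have hcast : j.castSucc = (⟨m, Nat.lt_succ_of_le (le_of_lt hml)⟩ : Fin (l + 1)) := rfl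
      have hsuccj : j.succ = (⟨m + 1, Nat.lt_succ_of_le hm⟩ : Fin (l + 1)) := rfl
      have hstepLB : LB (Q j.castSucc) (Q j.succ) (α j) (rm j) :=
        (count_lt_iff_LB (hQ j.castSucc) (hQ j.succ) (α j) (rm j)).1 (hsmall j)
      have hstepUB : UB (Q j.castSucc) (Q j.succ) (β j) (rp j) :=
        (count_gt_iff_UB (hQ j.castSucc) (hQ j.succ) (β j) (rp j)).1 (hlarge j)
      rw [hcast] at hstepLB hstepUB
      have hαm : α' m = α j := by rw [hα']; simp [hml, hj]
      have hβm : β' m = β j := by rw [hβ']; simp [hml, hj]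
      have hrmm : rm' m = rm j := by rw [hrm']; simp [hml, hj]
      have hrpm : rp' m = rp j := by rw [hrp']; simp [hml, hj]
      constructor
      · rw [Finset.prod_range_succ, Finset.sum_range_succ, hαm, hrmm]
        exact LB_trans (le_of_lt (Finset.prod_pos fun i _ => hα'pos i)) ihm.1 hstepLB
      · rw [Finset.prod_range_succ, Finset.sum_range_succ, hβm, hrpm]
        exact UB_trans (le_of_lt (Finset.prod_pos fun i _ => hβ'pos i)) ihm.2 hstepUB
  have hkey := key l le_rfl
  have hQP : Q ⟨l, Nat.lt_succ_of_le le_rfl⟩ = P := by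
    rw [show (⟨l, Nat.lt_succ_of_le le_rfl⟩ : Fin (l + 1)) = Fin.last l from rfl, hQl]
  rw [hQP] at hkey
  have hprodα : (∏ j, α j) = ∏ j ∈ Finset.range l, α' j := by
    rw [← Fin.prod_univ_eq_prod_range]
    refine Finset.prod_congr rfl fun i _ => ?_
    rw [hα']; simp [i.isLt]
  have hprodβ : (∏ j, β j) = ∏ j ∈ Finset.range l, β' j := by
    rw [← Fin.prod_univ_eq_prod_range]
    refine Finset.prod_congr rfl fun i _ => ?_
    rw [hβ']; simp [i.isLt]
  have hsumrm : (∑ j, rm j) = ∑ j ∈ Finset.range l, rm' j := by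
    rw [← Fin.sum_univ_eq_sum_range]
    refine Finset.sum_congr rfl fun i _ => ?_
    rw [hrm']; simp [i.isLt]
  have hsumrp : (∑ j, rp j) = ∑ j ∈ Finset.range l, rp' j := by
    rw [← Fin.sum_univ_eq_sum_range]
    refine Finset.sum_congr rfl fun i _ => ?_
    rw [hrp']; simp [i.isLt]
  constructor
  · rw [hprodα, hsumrm]
    exact (count_lt_iff_LB hA hP _ _).2 hkey.1
  · rw [hprodβ, hsumrp]
    exact (count_gt_iff_UB hA hP _ _).2 hkey.2
end

section
/- For every n ≥ 1, T_n(t²) ⪰ T_n(|t|) · T_n(|t|); that is, the matrix T_n(t²) − T_n(|t|)² is positive semidefinite. (This follows by taking the Schur complement of the positive semidefinite block Toeplitz matrix generated by the 2×2 matrix-valued function F(t) with rows (1, |t|) and (|t|, t²).) -/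
open Real MeasureTheory Matrix

/-- The `l`-th Fourier (cosine) coefficient of an even function `f` on `[-π, π]`:
`a_l = (1/π) ∫_0^π f(t) cos(l t) dt`. -/
noncomputable def fourierCoeffR (f : ℝ → ℝ) (l : ℤ) : ℝ :=
  (1 / π) * ∫ t in (0:ℝ)..π, f t * Real.cos ((l : ℝ) * t)

/-- The `n × n` symmetric Toeplitz matrix `T_n(f)` generated by `f`. -/
noncomputable def Tn (n : ℕ) (f : ℝ → ℝ) : Matrix (Fin n) (Fin n) ℝ :=
  Matrix.of fun j k => fourierCoeffR f (((j : ℕ) : ℤ) - ((k : ℕ) : ℤ))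

/-- The `n × n` sine-transform matrix `(S_n)_{ij} = √(2/(n+1)) sin(i j π/(n+1))`. -/
noncomputable def Sn (n : ℕ) : Matrix (Fin n) (Fin n) ℝ :=
  Matrix.of fun i j =>
    Real.sqrt (2 / (n + 1)) *
      Real.sin ((((i : ℕ) + 1) : ℝ) * (((j : ℕ) + 1) : ℝ) * π / (n + 1))

/-- The τ-matrix `τ_n(f) = S_n diag(f(kπ/(n+1))) S_n`. -/
noncomputable def taun (n : ℕ) (f : ℝ → ℝ) : Matrix (Fin n) (Fin n) ℝ :=
  Sn n * Matrix.diagonal (fun k : Fin n => f ((((k : ℕ) + 1) : ℝ) * π / (n + 1))) * Sn n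

theorem test (n : ℕ) : (Tn n fun t => |t|) = (Tn n fun t => |t|) := rfl


open intervalIntegral in
lemma integral_cos_int (d : ℤ) :
    (∫ t in (0:ℝ)..π, Real.cos ((d:ℝ) * t)) = if d = 0 then π else 0 := by
  rcases eq_or_ne d 0 with h | h
  · simp [h]
  · have hd : (d:ℝ) ≠ 0 := Int.cast_ne_zero.mpr h
    rw [integral_comp_mul_left Real.cos hd]
    simp [integral_cos, Real.sin_int_mul_pi d, h]

lemma orth (n : ℕ) (a b : Fin n) :
    (∫ t in (0:ℝ)..π, (Real.cos ((a:ℕ) * t) * Real.cos ((b:ℕ) * t)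
      + Real.sin ((a:ℕ) * t) * Real.sin ((b:ℕ) * t))) = if a = b then π else 0 := by
  set d : ℤ := ((a:ℕ) : ℤ) - ((b:ℕ) : ℤ) with hd
  have h : ∀ t : ℝ, Real.cos ((a:ℕ) * t) * Real.cos ((b:ℕ) * t)
      + Real.sin ((a:ℕ) * t) * Real.sin ((b:ℕ) * t) = Real.cos ((d:ℝ) * t) := by
    intro t
    rw [hd]
    push_cast
    rw [sub_mul, Real.cos_sub]
  simp only [h]
  rw [integral_cos_int]
  congr 1
  rw [hd, sub_eq_zero]
  simp [Fin.val_inj]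

noncomputable def Cfun (n : ℕ) (x : Fin n → ℝ) (t : ℝ) : ℝ :=
  ∑ j : Fin n, x j * Real.cos (((j:ℕ):ℝ) * t)

noncomputable def Sfun (n : ℕ) (x : Fin n → ℝ) (t : ℝ) : ℝ :=
  ∑ j : Fin n, x j * Real.sin (((j:ℕ):ℝ) * t)

lemma cont_Cfun (n : ℕ) (x : Fin n → ℝ) : Continuous (Cfun n x) := by
  apply continuous_finset_sum
  intro j _
  fun_prop

lemma cont_Sfun (n : ℕ) (x : Fin n → ℝ) : Continuous (Sfun n x) := by
  apply continuous_finset_sum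
  intro j _
  fun_prop

lemma coeff_expand (f : ℝ → ℝ) (n : ℕ) (m k : Fin n) :
    fourierCoeffR f (((m:ℕ):ℤ) - ((k:ℕ):ℤ))
      = (1/π) * ∫ t in (0:ℝ)..π,
          f t * (Real.cos ((m:ℕ) * t) * Real.cos ((k:ℕ) * t)
            + Real.sin ((m:ℕ) * t) * Real.sin ((k:ℕ) * t)) := by
  unfold fourierCoeffR
  congr 1
  apply intervalIntegral.integral_congr
  intro t _
  push_cast
  rw [sub_mul, Real.cos_sub]

lemma sum_comb (n : ℕ) (x : Fin n → ℝ) (t c A B : ℝ) :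
    ∑ j : Fin n, x j * (c * (A * Real.cos (((j:ℕ):ℝ) * t) + B * Real.sin (((j:ℕ):ℝ) * t)))
      = c * (A * Cfun n x t + B * Sfun n x t) := by
  calc ∑ j : Fin n, x j * (c * (A * Real.cos (((j:ℕ):ℝ) * t) + B * Real.sin (((j:ℕ):ℝ) * t)))
      = ∑ j : Fin n, (c * (A * (x j * Real.cos (((j:ℕ):ℝ) * t)))
          + c * (B * (x j * Real.sin (((j:ℕ):ℝ) * t)))) :=
        Finset.sum_congr rfl fun j _ => by ring
    _ = c * (A * Cfun n x t + B * Sfun n x t) := by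
        simp only [Cfun, Sfun, Finset.mul_sum, mul_add, Finset.sum_add_distrib]

lemma sum_comb' (n : ℕ) (x : Fin n → ℝ) (t c A B : ℝ) :
    ∑ j : Fin n, x j * (c * (Real.cos (((j:ℕ):ℝ) * t) * A + Real.sin (((j:ℕ):ℝ) * t) * B))
      = c * (Cfun n x t * A + Sfun n x t * B) := by
  calc ∑ j : Fin n, x j * (c * (Real.cos (((j:ℕ):ℝ) * t) * A + Real.sin (((j:ℕ):ℝ) * t) * B))
      = ∑ j : Fin n, (c * ((x j * Real.cos (((j:ℕ):ℝ) * t)) * A)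
          + c * ((x j * Real.sin (((j:ℕ):ℝ) * t)) * B)) :=
        Finset.sum_congr rfl fun j _ => by ring
    _ = c * (Cfun n x t * A + Sfun n x t * B) := by
        simp only [Cfun, Sfun, Finset.sum_mul, mul_add, Finset.mul_sum, Finset.sum_add_distrib]

lemma Tn_symm (f : ℝ → ℝ) (n : ℕ) : (Tn n f)ᵀ = Tn n f := by
  ext j k
  simp only [Matrix.transpose_apply, Tn, Matrix.of_apply]
  unfold fourierCoeffR
  congr 1
  apply intervalIntegral.integral_congr
  intro t _
  congr 1
  push_cast
  rw [show (((k:ℕ):ℝ) - ((j:ℕ):ℝ)) * t = -((((j:ℕ):ℝ) - ((k:ℕ):ℝ)) * t) by ring, Real.cos_neg]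

lemma mulVec_Tn (f : ℝ → ℝ) (hf : Continuous f) (n : ℕ) (x : Fin n → ℝ) (m : Fin n) :
    (Tn n f *ᵥ x) m
      = (1/π) * ∫ t in (0:ℝ)..π,
          f t * (Real.cos ((m:ℕ) * t) * Cfun n x t + Real.sin ((m:ℕ) * t) * Sfun n x t) := by
  have h1 : (Tn n f *ᵥ x) m = ∑ k : Fin n, x k * ((1/π) * ∫ t in (0:ℝ)..π,
      f t * (Real.cos ((m:ℕ) * t) * Real.cos ((k:ℕ) * t)
        + Real.sin ((m:ℕ) * t) * Real.sin ((k:ℕ) * t))) := by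
    simp only [Matrix.mulVec, dotProduct, Tn, Matrix.of_apply]
    refine Finset.sum_congr rfl fun k _ => ?_
    rw [mul_comm]
    congr 1
    exact coeff_expand f n m k
  have h2 : ∀ k : Fin n, x k * ((1/π) * ∫ t in (0:ℝ)..π,
      f t * (Real.cos ((m:ℕ) * t) * Real.cos ((k:ℕ) * t)
        + Real.sin ((m:ℕ) * t) * Real.sin ((k:ℕ) * t)))
      = (1/π) * ∫ t in (0:ℝ)..π, x k * (f t * (Real.cos ((m:ℕ) * t) * Real.cos ((k:ℕ) * t)
          + Real.sin ((m:ℕ) * t) * Real.sin ((k:ℕ) * t))) := by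
    intro k
    rw [intervalIntegral.integral_const_mul]
    ring
  rw [h1]
  simp only [h2]
  rw [← Finset.mul_sum]
  congr 1
  rw [← intervalIntegral.integral_finset_sum]
  · apply intervalIntegral.integral_congr
    intro t _
    exact sum_comb n x t (f t) (Real.cos ((m:ℕ) * t)) (Real.sin ((m:ℕ) * t))
  · intro k _
    apply Continuous.intervalIntegrable
    fun_prop

lemma quadform_Tn (f : ℝ → ℝ) (hf : Continuous f) (n : ℕ) (x : Fin n → ℝ) :
    x ⬝ᵥ (Tn n f *ᵥ x)
      = (1/π) * ∫ t in (0:ℝ)..π,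
          f t * (Cfun n x t * Cfun n x t + Sfun n x t * Sfun n x t) := by
  have h1 : x ⬝ᵥ (Tn n f *ᵥ x) = ∑ j : Fin n, x j * ((1/π) * ∫ t in (0:ℝ)..π,
      f t * (Real.cos ((j:ℕ) * t) * Cfun n x t + Real.sin ((j:ℕ) * t) * Sfun n x t)) := by
    simp only [dotProduct]
    exact Finset.sum_congr rfl fun j _ => by rw [mulVec_Tn f hf n x j]
  have h2 : ∀ j : Fin n, x j * ((1/π) * ∫ t in (0:ℝ)..π,
      f t * (Real.cos ((j:ℕ) * t) * Cfun n x t + Real.sin ((j:ℕ) * t) * Sfun n x t))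
      = (1/π) * ∫ t in (0:ℝ)..π, x j * (f t * (Real.cos ((j:ℕ) * t) * Cfun n x t
          + Real.sin ((j:ℕ) * t) * Sfun n x t)) := by
    intro j
    rw [intervalIntegral.integral_const_mul]
    ring
  rw [h1]
  simp only [h2]
  rw [← Finset.mul_sum]
  congr 1
  rw [← intervalIntegral.integral_finset_sum]
  · apply intervalIntegral.integral_congr
    intro t _
    exact sum_comb' n x t (f t) (Cfun n x t) (Sfun n x t)
  · intro j _
    apply Continuous.intervalIntegrable
    have hc := cont_Cfun n x
    have hs := cont_Sfun n x
    fun_prop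

lemma integral_sq_sum (n : ℕ) (v : Fin n → ℝ) :
    (∫ t in (0:ℝ)..π, (Cfun n v t * Cfun n v t + Sfun n v t * Sfun n v t))
      = π * ∑ m : Fin n, v m ^ 2 := by
  have hpt : ∀ t : ℝ, Cfun n v t * Cfun n v t + Sfun n v t * Sfun n v t
      = ∑ m : Fin n, v m * (1 * (Real.cos ((m:ℕ) * t) * Cfun n v t
          + Real.sin ((m:ℕ) * t) * Sfun n v t)) := by
    intro t
    rw [sum_comb' n v t 1 (Cfun n v t) (Sfun n v t)]
    ring
  simp only [hpt]
  rw [intervalIntegral.integral_finset_sum]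
  · rw [Finset.mul_sum]
    refine Finset.sum_congr rfl fun m _ => ?_
    have hin : ∀ t : ℝ, v m * (1 * (Real.cos ((m:ℕ) * t) * Cfun n v t
        + Real.sin ((m:ℕ) * t) * Sfun n v t))
        = ∑ l : Fin n, v l * (v m * (Real.cos ((m:ℕ) * t) * Real.cos ((l:ℕ) * t)
            + Real.sin ((m:ℕ) * t) * Real.sin ((l:ℕ) * t))) := by
      intro t
      rw [sum_comb n v t (v m) (Real.cos ((m:ℕ) * t)) (Real.sin ((m:ℕ) * t))]
      ring
    simp only [hin]
    rw [intervalIntegral.integral_finset_sum]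
    · have : ∀ l : Fin n, (∫ t in (0:ℝ)..π, v l * (v m * (Real.cos ((m:ℕ) * t) * Real.cos ((l:ℕ) * t)
          + Real.sin ((m:ℕ) * t) * Real.sin ((l:ℕ) * t))))
          = v l * (v m * (if m = l then π else 0)) := by
        intro l
        rw [intervalIntegral.integral_const_mul, intervalIntegral.integral_const_mul, orth n m l]
      simp only [this, mul_ite, mul_zero]
      rw [Finset.sum_ite_eq]
      simp [sq]
      ring
    · intro l _
      apply Continuous.intervalIntegrable
      fun_prop
  · intro m _
    apply Continuous.intervalIntegrable
    have hc := cont_Cfun n v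
    have hs := cont_Sfun n v
    fun_prop

/-- **Schur-complement inequality `T_n(t²) ⪰ T_n(|t|)²`.**
For every `n ≥ 1` the matrix `T_n(t²) - T_n(|t|) * T_n(|t|)` is positive
semidefinite. -/
theorem Tn_sq_ge_Tn_abs_sq (n : ℕ) (hn : 1 ≤ n) :
    (Tn n (fun t => t ^ 2) - Tn n (fun t => |t|) * Tn n (fun t => |t|)).PosSemidef := by
  have hπ : (0:ℝ) < π := Real.pi_pos
  have habs_cont : Continuous (fun t : ℝ => |t|) := continuous_abs
  have hsq_cont : Continuous (fun t : ℝ => t ^ 2) := by fun_prop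
  have hherm : ∀ f : ℝ → ℝ, (Tn n f).IsHermitian := by
    intro f
    ext j k
    simp only [Matrix.conjTranspose_apply, star_trivial]
    exact congrFun (congrFun (Tn_symm f n) j) k
  have hTTherm : (Tn n (fun t => |t|) * Tn n (fun t => |t|)).IsHermitian := by
    nth_rewrite 2 [← hherm (fun t => |t|)]
    exact Matrix.isHermitian_mul_conjTranspose_self _
  refine Matrix.posSemidef_iff_dotProduct_mulVec.mpr ⟨((hherm _).sub hTTherm), ?_⟩
  intro x
  rw [star_trivial]
  set v : Fin n → ℝ := Tn n (fun t => |t|) *ᵥ x with hv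
  have hc := cont_Cfun n x
  have hs := cont_Sfun n x
  have hcv := cont_Cfun n v
  have hsv := cont_Sfun n v
  -- the second quadratic form is ∑ (v m)^2
  have hTT : x ⬝ᵥ ((Tn n (fun t => |t|) * Tn n (fun t => |t|)) *ᵥ x) = ∑ m : Fin n, v m ^ 2 := by
    rw [← Matrix.mulVec_mulVec, Matrix.dotProduct_mulVec, ← hv]
    have hx : x ᵥ* Tn n (fun t => |t|) = v := by
      rw [← Tn_symm (fun t => |t|) n, Matrix.vecMul_transpose, hv]
    rw [hx]
    simp only [dotProduct, sq]
  -- integral representation of v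
  have habs : ∀ m : Fin n, (∫ t in (0:ℝ)..π,
      t * (Real.cos ((m:ℕ) * t) * Cfun n x t + Real.sin ((m:ℕ) * t) * Sfun n x t))
      = π * v m := by
    intro m
    have h1 := mulVec_Tn (fun t => |t|) habs_cont n x m
    have h2 : (∫ t in (0:ℝ)..π,
        |t| * (Real.cos ((m:ℕ) * t) * Cfun n x t + Real.sin ((m:ℕ) * t) * Sfun n x t))
        = ∫ t in (0:ℝ)..π,
        t * (Real.cos ((m:ℕ) * t) * Cfun n x t + Real.sin ((m:ℕ) * t) * Sfun n x t) := by
      apply intervalIntegral.integral_congr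
      intro t ht
      rw [Set.uIcc_of_le hπ.le] at ht
      simp only [abs_of_nonneg ht.1]
    rw [h2] at h1
    rw [← hv] at h1
    rw [h1]
    rw [← mul_assoc, mul_one_div_cancel hπ.ne', one_mul]
  -- cross-term integrand identity
  have hG : ∀ t : ℝ,
      (t * Cfun n x t - Cfun n v t) ^ 2 + (t * Sfun n x t - Sfun n v t) ^ 2
      = t ^ 2 * (Cfun n x t * Cfun n x t + Sfun n x t * Sfun n x t)
        - 2 * (∑ m : Fin n, v m * (t * (Real.cos ((m:ℕ) * t) * Cfun n x t
            + Real.sin ((m:ℕ) * t) * Sfun n x t)))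
        + (Cfun n v t * Cfun n v t + Sfun n v t * Sfun n v t) := by
    intro t
    rw [sum_comb' n v t t (Cfun n x t) (Sfun n x t)]
    ring
  -- integrability of the pieces
  have hint1 : IntervalIntegrable (fun t : ℝ => t ^ 2 * (Cfun n x t * Cfun n x t
      + Sfun n x t * Sfun n x t)) volume 0 π := by
    apply Continuous.intervalIntegrable; fun_prop
  have hcont2 : Continuous (fun t : ℝ => ∑ m : Fin n, v m * (t * (Real.cos ((m:ℕ) * t) * Cfun n x t
      + Real.sin ((m:ℕ) * t) * Sfun n x t))) := by
    apply continuous_finset_sum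
    intro m _
    fun_prop
  have hint2 : IntervalIntegrable (fun t : ℝ => 2 * ∑ m : Fin n, v m * (t * (Real.cos ((m:ℕ) * t) * Cfun n x t
      + Real.sin ((m:ℕ) * t) * Sfun n x t))) volume 0 π := by
    apply Continuous.intervalIntegrable
    fun_prop
  have hint3 : IntervalIntegrable (fun t : ℝ => Cfun n v t * Cfun n v t
      + Sfun n v t * Sfun n v t) volume 0 π := by
    apply Continuous.intervalIntegrable; fun_prop
  -- value of the middle integral
  have hmid : (∫ t in (0:ℝ)..π, 2 * ∑ m : Fin n, v m * (t * (Real.cos ((m:ℕ) * t) * Cfun n x t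
      + Real.sin ((m:ℕ) * t) * Sfun n x t))) = 2 * π * ∑ m : Fin n, v m ^ 2 := by
    rw [intervalIntegral.integral_const_mul, intervalIntegral.integral_finset_sum]
    · have : ∀ m : Fin n, (∫ t in (0:ℝ)..π, v m * (t * (Real.cos ((m:ℕ) * t) * Cfun n x t
          + Real.sin ((m:ℕ) * t) * Sfun n x t))) = v m * (π * v m) := by
        intro m
        rw [intervalIntegral.integral_const_mul, habs m]
      simp only [this]
      have hsum : ∑ m : Fin n, v m * (π * v m) = π * ∑ m : Fin n, v m ^ 2 := by
        rw [Finset.mul_sum]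
        exact Finset.sum_congr rfl fun m _ => by ring
      rw [hsum]
      ring
    · intro m _
      apply Continuous.intervalIntegrable
      fun_prop
  -- the nonnegative integral
  have hGnonneg : (0:ℝ) ≤ ∫ t in (0:ℝ)..π,
      ((t * Cfun n x t - Cfun n v t) ^ 2 + (t * Sfun n x t - Sfun n v t) ^ 2) := by
    apply intervalIntegral.integral_nonneg hπ.le
    intro t _
    positivity
  -- compute the integral of G
  have hGval : (∫ t in (0:ℝ)..π,
      ((t * Cfun n x t - Cfun n v t) ^ 2 + (t * Sfun n x t - Sfun n v t) ^ 2))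
      = (∫ t in (0:ℝ)..π, t ^ 2 * (Cfun n x t * Cfun n x t + Sfun n x t * Sfun n x t))
        - π * ∑ m : Fin n, v m ^ 2 := by
    have heq : (fun t : ℝ => (t * Cfun n x t - Cfun n v t) ^ 2 + (t * Sfun n x t - Sfun n v t) ^ 2)
        = fun t : ℝ => (t ^ 2 * (Cfun n x t * Cfun n x t + Sfun n x t * Sfun n x t)
          - 2 * (∑ m : Fin n, v m * (t * (Real.cos ((m:ℕ) * t) * Cfun n x t
              + Real.sin ((m:ℕ) * t) * Sfun n x t)))
          + (Cfun n v t * Cfun n v t + Sfun n v t * Sfun n v t)) := funext hG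
    rw [heq]
    rw [intervalIntegral.integral_add (hint1.sub hint2) hint3,
      intervalIntegral.integral_sub hint1 hint2, hmid, integral_sq_sum n v]
    ring
  -- assemble
  rw [Matrix.sub_mulVec, dotProduct_sub, hTT,
    quadform_Tn (fun t => t ^ 2) hsq_cont n x]
  have hfinal : (1/π) * (∫ t in (0:ℝ)..π, t ^ 2 * (Cfun n x t * Cfun n x t
      + Sfun n x t * Sfun n x t)) - ∑ m : Fin n, v m ^ 2
      = (1/π) * ∫ t in (0:ℝ)..π,
        ((t * Cfun n x t - Cfun n v t) ^ 2 + (t * Sfun n x t - Sfun n v t) ^ 2) := by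
    rw [hGval]
    field_simp
  rw [hfinal]
  positivity
end

section
/- Let θ₁, θ₂ ≥ 0 and set θ̂ = (θ₁ + θ₂)/2. Then for every n ≥ 1 the matrix T_n(|t|^{θ₁}) is positive definite and T_n(|t|^{θ₂}) ⪰ T_n(|t|^{θ̂}) · T_n(|t|^{θ₁})^{−1} · T_n(|t|^{θ̂}); that is, T_n(|t|^{θ₂}) − T_n(|t|^{θ̂}) T_n(|t|^{θ₁})^{−1} T_n(|t|^{θ̂}) is positive semidefinite. -/
set_option maxHeartbeats 1000000


open Real MeasureTheory Matrix Polynomial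

noncomputable def Cf (n : ℕ) (x : Fin n → ℝ) (t : ℝ) : ℝ := ∑ j, x j * Real.cos (j * t)
noncomputable def Sf (n : ℕ) (x : Fin n → ℝ) (t : ℝ) : ℝ := ∑ j, x j * Real.sin (j * t)

lemma contCf (n : ℕ) (x : Fin n → ℝ) : Continuous (Cf n x) := by unfold Cf; fun_prop
lemma contSf (n : ℕ) (x : Fin n → ℝ) : Continuous (Sf n x) := by unfold Sf; fun_prop

lemma quadform (n : ℕ) (f : ℝ → ℝ) (hf : Continuous f) (x y : Fin n → ℝ) :
    x ⬝ᵥ (Tn n f) *ᵥ y =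
      (1/π) * ∫ t in (0:ℝ)..π, f t * (Cf n x t * Cf n y t + Sf n x t * Sf n y t) := by
  have hswap : (fun t => f t * (Cf n x t * Cf n y t + Sf n x t * Sf n y t))
      = fun t => ∑ j : Fin n, ∑ k : Fin n, x j * y k *
          (f t * (Real.cos (j * t) * Real.cos (k * t) + Real.sin (j * t) * Real.sin (k * t))) := by
    funext t
    unfold Cf Sf
    rw [Finset.sum_mul_sum, Finset.sum_mul_sum, ← Finset.sum_add_distrib, Finset.mul_sum]
    refine Finset.sum_congr rfl fun j _ => ?_
    rw [← Finset.sum_add_distrib, Finset.mul_sum]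
    exact Finset.sum_congr rfl fun k _ => by ring
  have hint : ∀ (j k : Fin n), IntervalIntegrable (fun t => x j * y k *
      (f t * (Real.cos (j * t) * Real.cos (k * t) + Real.sin (j * t) * Real.sin (k * t))))
      volume 0 π := fun j k => (by fun_prop : Continuous _).intervalIntegrable 0 π
  rw [hswap]
  have hs1 : (∫ t in (0:ℝ)..π, ∑ j : Fin n, ∑ k : Fin n, x j * y k *
        (f t * (Real.cos (j * t) * Real.cos (k * t) + Real.sin (j * t) * Real.sin (k * t))))
      = ∑ j : Fin n, ∫ t in (0:ℝ)..π, ∑ k : Fin n, x j * y k *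
        (f t * (Real.cos (j * t) * Real.cos (k * t) + Real.sin (j * t) * Real.sin (k * t))) := by
    apply intervalIntegral.integral_finset_sum
    intro j _
    exact (Continuous.intervalIntegrable (by fun_prop) 0 π)
  rw [hs1, Finset.mul_sum]
  simp only [dotProduct, mulVec, Tn, Matrix.of_apply, fourierCoeffR]
  refine Finset.sum_congr rfl fun j _ => ?_
  have hs2 : (∫ t in (0:ℝ)..π, ∑ k : Fin n, x j * y k *
        (f t * (Real.cos (j * t) * Real.cos (k * t) + Real.sin (j * t) * Real.sin (k * t))))
      = ∑ k : Fin n, ∫ t in (0:ℝ)..π, x j * y k *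
        (f t * (Real.cos (j * t) * Real.cos (k * t) + Real.sin (j * t) * Real.sin (k * t))) := by
    apply intervalIntegral.integral_finset_sum
    intro k _
    exact hint j k
  rw [hs2, Finset.mul_sum, Finset.mul_sum]
  refine Finset.sum_congr rfl fun k _ => ?_
  rw [intervalIntegral.integral_const_mul]
  have hcos : ∀ t : ℝ, Real.cos (((((j:ℕ):ℤ) - ((k:ℕ):ℤ) : ℤ) : ℝ) * t)
      = Real.cos ((j:ℝ) * t) * Real.cos ((k:ℝ) * t) + Real.sin ((j:ℝ) * t) * Real.sin ((k:ℝ) * t) := by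
    intro t
    push_cast
    rw [sub_mul, Real.cos_sub]
  simp only [hcos]
  ring

lemma Tn_herm (n : ℕ) (f : ℝ → ℝ) : (Tn n f).IsHermitian := by
  ext j k
  simp only [Tn, conjTranspose_apply, Matrix.of_apply, star_trivial, fourierCoeffR]
  congr 1
  apply intervalIntegral.integral_congr
  intro t _
  have : ((((j:ℕ):ℤ) - ((k:ℕ):ℤ) : ℤ) : ℝ) * t = -(((((k:ℕ):ℤ) - ((j:ℕ):ℤ) : ℤ) : ℝ) * t) := by
    push_cast; ring
  dsimp only
  rw [this, Real.cos_neg]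

lemma cont_abs_rpow (θ : ℝ) (hθ : 0 ≤ θ) : Continuous fun t : ℝ => |t| ^ θ :=
  continuous_abs.rpow_const (fun _ => Or.inr hθ)

lemma key_ineq (θ₁ θ₂ : ℝ) (hθ₁ : 0 ≤ θ₁) (hθ₂ : 0 ≤ θ₂) (n : ℕ) (x y : Fin n → ℝ) :
    2 * (x ⬝ᵥ (Tn n fun t => |t| ^ ((θ₁ + θ₂) / 2)) *ᵥ y) ≤
      x ⬝ᵥ (Tn n fun t => |t| ^ θ₂) *ᵥ x + y ⬝ᵥ (Tn n fun t => |t| ^ θ₁) *ᵥ y := by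
  have hc2 := cont_abs_rpow θ₂ hθ₂
  have hc1 := cont_abs_rpow θ₁ hθ₁
  have hcm := cont_abs_rpow ((θ₁ + θ₂) / 2) (by linarith)
  rw [quadform n _ hc2 x x, quadform n _ hc1 y y, quadform n _ hcm x y]
  set g2 : ℝ → ℝ := fun t => |t| ^ θ₂ * (Cf n x t * Cf n x t + Sf n x t * Sf n x t) with hg2
  set g1 : ℝ → ℝ := fun t => |t| ^ θ₁ * (Cf n y t * Cf n y t + Sf n y t * Sf n y t) with hg1
  set gm : ℝ → ℝ := fun t => |t| ^ ((θ₁ + θ₂) / 2) *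
      (Cf n x t * Cf n y t + Sf n x t * Sf n y t) with hgm
  have hig2 : IntervalIntegrable g2 volume 0 π := by
    apply Continuous.intervalIntegrable
    exact hc2.mul (((contCf n x).mul (contCf n x)).add ((contSf n x).mul (contSf n x)))
  have hig1 : IntervalIntegrable g1 volume 0 π := by
    apply Continuous.intervalIntegrable
    exact hc1.mul (((contCf n y).mul (contCf n y)).add ((contSf n y).mul (contSf n y)))
  have higm : IntervalIntegrable gm volume 0 π := by
    apply Continuous.intervalIntegrable
    exact hcm.mul (((contCf n x).mul (contCf n y)).add ((contSf n x).mul (contSf n y)))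
  have hkey : 0 ≤ ∫ t in (0:ℝ)..π, (g2 t + g1 t - 2 * gm t) := by
    apply intervalIntegral.integral_nonneg_of_ae_restrict pi_pos.le
    have h0 : ∀ᵐ (t : ℝ), t ≠ 0 := by
      have hv : volume ({0} : Set ℝ) = 0 := Real.volume_singleton
      exact (MeasureTheory.measure_eq_zero_iff_ae_notMem.mp hv).mono (by intro t h; simpa using h)
    filter_upwards [MeasureTheory.ae_restrict_of_ae h0] with t ht
    have hspos : 0 < |t| := abs_pos.mpr ht
    have h2 : |t| ^ θ₂ = |t| ^ (θ₂ / 2) * |t| ^ (θ₂ / 2) := by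
      rw [← Real.rpow_add hspos]; norm_num
    have h1 : |t| ^ θ₁ = |t| ^ (θ₁ / 2) * |t| ^ (θ₁ / 2) := by
      rw [← Real.rpow_add hspos]; norm_num
    have hm : |t| ^ ((θ₁ + θ₂) / 2) = |t| ^ (θ₂ / 2) * |t| ^ (θ₁ / 2) := by
      rw [← Real.rpow_add hspos]; ring_nf
    simp only [Pi.zero_apply, hg2, hg1, hgm, h2, h1, hm]
    nlinarith [sq_nonneg (|t| ^ (θ₂/2) * Cf n x t - |t| ^ (θ₁/2) * Cf n y t),
      sq_nonneg (|t| ^ (θ₂/2) * Sf n x t - |t| ^ (θ₁/2) * Sf n y t)]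
  rw [intervalIntegral.integral_sub (hig2.add hig1) (higm.const_mul 2),
    intervalIntegral.integral_add hig2 hig1, intervalIntegral.integral_const_mul] at hkey
  have hπ : 0 < 1 / π := by positivity
  nlinarith [hkey, hπ]

lemma Tn_posdef (θ : ℝ) (hθ : 0 ≤ θ) (n : ℕ) : (Tn n fun t => |t| ^ θ).PosDef := by
  refine Matrix.PosDef.of_dotProduct_mulVec_pos (Tn_herm n _) fun x hx => ?_
  have hc := cont_abs_rpow θ hθ
  have hq := quadform n _ hc x x
  simp only [star_trivial]
  rw [hq]
  set g : ℝ → ℝ := fun t => |t| ^ θ * (Cf n x t * Cf n x t + Sf n x t * Sf n x t) with hg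
  have hgnn : ∀ t, 0 ≤ g t := fun t => mul_nonneg (Real.rpow_nonneg (abs_nonneg t) θ)
      (by nlinarith [mul_self_nonneg (Cf n x t), mul_self_nonneg (Sf n x t)])
  have hgc : Continuous g :=
    hc.mul (((contCf n x).mul (contCf n x)).add ((contSf n x).mul (contSf n x)))
  obtain ⟨j₀, hj₀⟩ := Function.ne_iff.mp hx
  set p : Polynomial ℂ := ∑ j : Fin n, Polynomial.C (x j : ℂ) * Polynomial.X ^ (j : ℕ) with hp
  have hpc : ∀ m : Fin n, p.coeff m = (x m : ℂ) := by
    intro m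
    rw [hp, Polynomial.finset_sum_coeff]
    rw [Finset.sum_eq_single m]
    · simp
    · intro b _ hb
      simp only [Polynomial.coeff_C_mul, Polynomial.coeff_X_pow, mul_ite, mul_one, mul_zero,
        ite_eq_right_iff]
      intro h
      exact absurd (Fin.val_injective h.symm) hb
    · intro h; exact absurd (Finset.mem_univ m) h
  have hp0 : p ≠ 0 := by
    intro h
    apply hj₀
    have h2 := hpc j₀
    rw [h] at h2
    simpa using h2.symm
  have heval : ∀ t : ℝ, Cf n x t = 0 → Sf n x t = 0 →
      p.IsRoot (Complex.exp (t * Complex.I)) := by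
    intro t hC hS
    have hev : p.eval (Complex.exp (t * Complex.I))
        = (Cf n x t : ℂ) + (Sf n x t : ℂ) * Complex.I := by
      rw [hp, Polynomial.eval_finset_sum]
      simp only [Polynomial.eval_mul, Polynomial.eval_C, Polynomial.eval_pow, Polynomial.eval_X]
      rw [Cf, Sf]
      push_cast
      rw [Finset.sum_mul, ← Finset.sum_add_distrib]
      refine Finset.sum_congr rfl fun j _ => ?_
      rw [← Complex.exp_nat_mul]
      have harg : ((j : ℕ) : ℂ) * (↑t * Complex.I) = ((((j:ℕ) : ℝ) * t : ℝ) : ℂ) * Complex.I := by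
        push_cast; ring
      rw [harg, Complex.exp_mul_I]
      push_cast
      ring
    rw [Polynomial.IsRoot, hev, hC, hS]
    simp
  have hBfin : ({t ∈ Set.Ioc (0:ℝ) π | Cf n x t = 0 ∧ Sf n x t = 0} : Set ℝ).Finite := by
    apply Set.Finite.of_finite_image (f := fun t : ℝ => Complex.exp (t * Complex.I))
    · apply (Polynomial.finite_setOf_isRoot hp0).subset
      rintro z ⟨t, ⟨htI, hC, hS⟩, rfl⟩
      exact heval t hC hS
    · rintro t₁ ⟨ht₁, -⟩ t₂ ⟨ht₂, -⟩ hE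
      simp only at hE
      rw [Complex.exp_eq_exp_iff_exists_int] at hE
      obtain ⟨m, hm⟩ := hE
      have hme : (t₁ : ℂ) * Complex.I = ((t₂ + m * (2 * π) : ℝ) : ℂ) * Complex.I := by
        rw [hm]; push_cast; ring
      have hreal : t₁ = t₂ + m * (2 * π) :=
        Complex.ofReal_injective (mul_right_cancel₀ Complex.I_ne_zero hme)
      have hm0 : m = 0 := by
        by_contra h
        have h1 : (1:ℝ) ≤ |(m:ℝ)| := by
          exact_mod_cast Int.one_le_abs (by simpa using h)
        have h2 : |(m:ℝ) * (2 * π)| < π := by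
          rw [show (m:ℝ) * (2 * π) = t₁ - t₂ by linarith]
          rw [abs_lt]
          constructor <;> [linarith [ht₁.1, ht₂.2]; linarith [ht₁.2, ht₂.1]]
        rw [abs_mul, abs_of_pos (by positivity : (0:ℝ) < 2 * π)] at h2
        nlinarith [pi_pos]
      rw [hm0] at hreal
      push_cast at hreal
      linarith
  have hμB : volume {t ∈ Set.Ioc (0:ℝ) π | Cf n x t = 0 ∧ Sf n x t = 0} = 0 :=
    hBfin.measure_zero _
  have hsub : Set.Ioc (0:ℝ) π ⊆ (Function.support g ∩ Set.Ioc 0 π) ∪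
      {t ∈ Set.Ioc (0:ℝ) π | Cf n x t = 0 ∧ Sf n x t = 0} := by
    intro t ht
    by_cases hgt : g t = 0
    · right
      refine ⟨ht, ?_⟩
      have hpos : 0 < |t| ^ θ := Real.rpow_pos_of_pos (abs_pos.mpr (ne_of_gt ht.1)) θ
      have hS : Cf n x t * Cf n x t + Sf n x t * Sf n x t = 0 :=
        (mul_eq_zero.mp hgt).resolve_left hpos.ne'
      constructor <;>
        nlinarith [mul_self_nonneg (Cf n x t), mul_self_nonneg (Sf n x t)]
    · left; exact ⟨hgt, ht⟩
  have hμ : 0 < volume (Function.support g ∩ Set.Ioc 0 π) := by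
    rw [pos_iff_ne_zero]
    intro h0
    have hle := (measure_mono hsub).trans (measure_union_le (μ := volume) _ _)
    rw [h0, hμB, add_zero, Real.volume_Ioc] at hle
    simp only [nonpos_iff_eq_zero, ENNReal.ofReal_eq_zero, sub_zero] at hle
    linarith [pi_pos]
  have hint : 0 < ∫ t in Set.Ioc (0:ℝ) π, g t := by
    rw [MeasureTheory.setIntegral_pos_iff_support_of_nonneg_ae
      (Filter.Eventually.of_forall hgnn) (hgc.integrableOn_Ioc)]
    exact hμ
  rw [intervalIntegral.integral_of_le pi_pos.le]
  exact mul_pos (by positivity) hint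

/-- **Schur-complement inequality for intermediate exponents.**
For `θ₁, θ₂ ≥ 0` and `θ̂ = (θ₁ + θ₂)/2`, the matrix `T_n(|t|^θ₁)` is positive
definite and `T_n(|t|^θ₂) - T_n(|t|^θ̂) T_n(|t|^θ₁)⁻¹ T_n(|t|^θ̂)` is positive
semidefinite. -/
theorem Tn_schur_complement_rpow
    (θ₁ θ₂ : ℝ) (hθ₁ : 0 ≤ θ₁) (hθ₂ : 0 ≤ θ₂)
    (n : ℕ) (hn : 1 ≤ n) :
    (Tn n (fun t => |t| ^ θ₁)).PosDef ∧
    (Tn n (fun t => |t| ^ θ₂) -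
      Tn n (fun t => |t| ^ ((θ₁ + θ₂) / 2)) * (Tn n (fun t => |t| ^ θ₁))⁻¹ *
        Tn n (fun t => |t| ^ ((θ₁ + θ₂) / 2))).PosSemidef := by
  have hA : (Tn n fun t => |t| ^ θ₁).PosDef := Tn_posdef θ₁ hθ₁ n
  refine ⟨hA, Matrix.PosSemidef.of_dotProduct_mulVec_nonneg ?_ ?_⟩
  · -- Hermitian
    refine (Tn_herm n _).sub ?_
    have h := Matrix.isHermitian_mul_mul_conjTranspose
      (Tn n fun t => |t| ^ ((θ₁ + θ₂) / 2)) (hA.1.inv)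
    rwa [Tn_herm n _] at h
  · intro z
    set A := Tn n fun t => |t| ^ θ₁ with hAdef
    set M := Tn n fun t => |t| ^ ((θ₁ + θ₂) / 2) with hMdef
    set T2 := Tn n fun t => |t| ^ θ₂ with hT2def
    have hdet : IsUnit A.det := isUnit_iff_ne_zero.mpr hA.det_pos.ne'
    have hAinv : A * A⁻¹ = 1 := Matrix.mul_nonsing_inv A hdet
    have hMh : Mᴴ = M := Tn_herm n _
    have hMt : Mᵀ = M := by
      rw [← Matrix.conjTranspose_eq_transpose_of_trivial]; exact hMh
    set w := A⁻¹ *ᵥ (M *ᵥ z) with hw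
    have hAw : A *ᵥ w = M *ᵥ z := by
      rw [hw, Matrix.mulVec_mulVec, hAinv, Matrix.one_mulVec]
    have hexp : z ⬝ᵥ (M * A⁻¹ * M) *ᵥ z = z ⬝ᵥ M *ᵥ w := by
      rw [hw, Matrix.mulVec_mulVec, Matrix.mulVec_mulVec]
    have hsym : w ⬝ᵥ A *ᵥ w = z ⬝ᵥ M *ᵥ w := by
      rw [hAw, Matrix.dotProduct_mulVec w M z, ← hMt, Matrix.vecMul_transpose,
        dotProduct_comm]
      rw [hMt]
    have hk := key_ineq θ₁ θ₂ hθ₁ hθ₂ n z w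
    rw [hsym] at hk
    simp only [star_trivial, Matrix.sub_mulVec, dotProduct_sub]
    rw [hexp]
    linarith
end
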